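/- Up to translation and rotation (but not reflection), there are exactly 7 connected configurations of 4 cells in the 2D square grid (the one-sided tetrominoes). -/

import Mathlib

/-- Side-adjacency: ℓ¹ distance 1. -/
def SideAdj (p q : ℤ × ℤ) : Prop := |p.1 - q.1| + |p.2 - q.2| = 1

/-- A finite set of cells is connected under side-adjacency. -/
def ConnectedConfig (S : Finset (ℤ × ℤ)) : Prop :=
  ∀ a ∈ S, ∀ b ∈ S, Relation.ReflTransGen (fun x y => x ∈ S ∧ y ∈ S ∧ SideAdj x y) a b

/-- Rotation by π/2 (counter-clockwise) about the origin on the grid. -/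
def Rot90 (p : ℤ × ℤ) : ℤ × ℤ := (-p.2, p.1)

/-- `S` and `T` are equivalent up to a rotation by a multiple of π/2 composed with a
translation (no reflections). -/
def RotTransEquiv (S T : Finset (ℤ × ℤ)) : Prop :=
  ∃ (k : ℕ) (v : ℤ × ℤ), T = S.image (fun p => Rot90^[k] p + v)

/-!
After a translation taking its lexicographically least cell to the origin, a connected
configuration of four cells consists of the origin and three cells that come later in the
lexicographic order and lie within ℓ¹-distance 3 of it: along a path inside the configuration
the ℓ¹-distance to the origin changes by at most one per step, so every intermediate value is
taken on some cell. That leaves 220 candidates, which are checked by evaluation, connectivity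
being decided by the criterion that every proper nonempty subset has a neighbour outside it.
Equivalence is decidable too: up to translation a configuration is determined by its
translate with least coordinates zero, so two configurations are equivalent iff some rotation
of the first has the same such translate as the second.
-/

open Finset Relation

section RestrictedPaths

variable {α : Type*} {r : α → α → Prop} {S : Finset α}

theorem exists_mem_eq_of_reflTransGen {f : α → ℤ} (hf : ∀ x y, r x y → f y ≤ f x + 1)
    {a b : α} (ha : a ∈ S) (h : ReflTransGen (fun x y => x ∈ S ∧ y ∈ S ∧ r x y) a b)
    {t : ℤ} (hat : f a ≤ t) (htb : t ≤ f b) : ∃ p ∈ S, f p = t := by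
  induction h with
  | refl => exact ⟨a, ha, le_antisymm hat htb⟩
  | @tail c b _ hcb ih =>
    by_cases htc : t ≤ f c
    · exact ih htc
    · have := hf c b hcb.2.2
      exact ⟨b, hcb.2.1, by omega⟩

theorem sub_lt_card_of_reflTransGen {f : α → ℤ} (hf : ∀ x y, r x y → f y ≤ f x + 1)
    {a b : α} (ha : a ∈ S) (h : ReflTransGen (fun x y => x ∈ S ∧ y ∈ S ∧ r x y) a b) :
    f b - f a < #S := by
  classical
  have hIcc : Icc (f a) (f b) ⊆ S.image f := fun t ht => by
    obtain ⟨hat, htb⟩ := mem_Icc.1 ht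
    obtain ⟨p, hp, rfl⟩ := exists_mem_eq_of_reflTransGen hf ha h hat htb
    exact mem_image_of_mem f hp
  have hcard := (card_le_card hIcc).trans card_image_le
  have hpos := card_pos.2 ⟨a, ha⟩
  rw [Int.card_Icc] at hcard
  omega

variable [DecidableEq α]

theorem exists_rel_sdiff_of_reflTransGen {T : Finset α} {a b : α}
    (h : ReflTransGen (fun x y => x ∈ S ∧ y ∈ S ∧ r x y) a b) (ha : a ∈ T) (hb : b ∉ T) :
    ∃ p ∈ T, ∃ q ∈ S \ T, r p q := by
  induction h with
  | refl => exact absurd ha hb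
  | @tail c b _ hcb ih =>
    by_cases hc : c ∈ T
    · exact ⟨c, hc, b, mem_sdiff.2 ⟨hcb.2.1, hb⟩, hcb.2.2⟩
    · exact ih hc

theorem forall_reflTransGen_iff_forall_exists_rel :
    (∀ a ∈ S, ∀ b ∈ S, ReflTransGen (fun x y => x ∈ S ∧ y ∈ S ∧ r x y) a b) ↔
      ∀ T ⊆ S, T.Nonempty → T ≠ S → ∃ p ∈ T, ∃ q ∈ S \ T, r p q := by
  constructor
  · rintro hconn T hTS ⟨a, ha⟩ hne
    obtain ⟨b, hbS, hbT⟩ := exists_of_ssubset (ssubset_of_subset_of_ne hTS hne)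
    exact exists_rel_sdiff_of_reflTransGen (hconn a (hTS ha) b hbS) ha hbT
  · intro hcut a ha b hb
    classical
    set T := S.filter (ReflTransGen (fun x y => x ∈ S ∧ y ∈ S ∧ r x y) a)
    by_contra hab
    have hbT : b ∉ T := fun h => hab (mem_filter.1 h).2
    obtain ⟨p, hp, q, hq, hpq⟩ :=
      hcut T (filter_subset _ _) ⟨a, mem_filter.2 ⟨ha, .refl⟩⟩ (fun h => hbT (h ▸ hb))
    obtain ⟨hpS, hap⟩ := mem_filter.1 hp
    obtain ⟨hqS, hqT⟩ := mem_sdiff.1 hq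
    exact hqT (mem_filter.2 ⟨hqS, hap.tail ⟨hpS, hqS, hpq⟩⟩)

end RestrictedPaths

instance : DecidableRel SideAdj := fun p q =>
  inferInstanceAs (Decidable (|p.1 - q.1| + |p.2 - q.2| = 1))

instance : DecidablePred ConnectedConfig := fun _ =>
  decidable_of_iff' _ forall_reflTransGen_iff_forall_exists_rel

theorem sideAdj_add_right {p q : ℤ × ℤ} (v : ℤ × ℤ) : SideAdj (p + v) (q + v) ↔ SideAdj p q := by
  simp only [SideAdj, Prod.fst_add, Prod.snd_add, add_sub_add_right_eq_sub]

theorem SideAdj.abs_add_abs_le {x y : ℤ × ℤ} (h : SideAdj x y) (c : ℤ × ℤ) :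
    |y.1 - c.1| + |y.2 - c.2| ≤ |x.1 - c.1| + |x.2 - c.2| + 1 := by
  have h1 := abs_sub_le y.1 x.1 c.1
  have h2 := abs_sub_le y.2 x.2 c.2
  rw [SideAdj, abs_sub_comm x.1, abs_sub_comm x.2] at h
  linarith

theorem ConnectedConfig.image {S : Finset (ℤ × ℤ)} (h : ConnectedConfig S) {f : ℤ × ℤ → ℤ × ℤ}
    (hf : ∀ p q, SideAdj p q → SideAdj (f p) (f q)) : ConnectedConfig (S.image f) := by
  intro _ hfa _ hfb
  obtain ⟨a, ha, rfl⟩ := mem_image.1 hfa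
  obtain ⟨b, hb, rfl⟩ := mem_image.1 hfb
  exact (h a ha b hb).lift f fun x y ⟨hx, hy, hxy⟩ =>
    ⟨mem_image_of_mem f hx, mem_image_of_mem f hy, hf x y hxy⟩

theorem ConnectedConfig.abs_add_abs_lt_card {S : Finset (ℤ × ℤ)} (h : ConnectedConfig S)
    {a b : ℤ × ℤ} (ha : a ∈ S) (hb : b ∈ S) : |b.1 - a.1| + |b.2 - a.2| < #S := by
  simpa using sub_lt_card_of_reflTransGen (fun x y hxy => hxy.abs_add_abs_le a) ha (h a ha b hb)

theorem iterate_rot90_mod_four (k : ℕ) : Rot90^[k % 4] = Rot90^[k] := by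
  have hper (p : ℤ × ℤ) : Function.IsPeriodicPt Rot90 4 p := by
    simp [Function.IsPeriodicPt, Function.IsFixedPt, Rot90]
  exact funext fun p => (hper p).iterate_mod_apply k

def lowerLeft (A : Finset (ℤ × ℤ)) : ℤ × ℤ :=
  if h : A.Nonempty then ((A.image Prod.fst).min' (h.image _), (A.image Prod.snd).min' (h.image _))
  else 0

def cornerForm (A : Finset (ℤ × ℤ)) : Finset (ℤ × ℤ) :=
  A.image (· - lowerLeft A)

theorem lowerLeft_image_add {A : Finset (ℤ × ℤ)} (hA : A.Nonempty) (v : ℤ × ℤ) :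
    lowerLeft (A.image (· + v)) = lowerLeft A + v := by
  rw [lowerLeft, lowerLeft, dif_pos hA, dif_pos (hA.image _)]
  refine Prod.ext ?_ ?_
  · refine Eq.trans ?_ ((add_left_mono (a := v.1)).map_finset_min' (hA.image Prod.fst)).symm
    simp only [image_image, Function.comp_def, Prod.fst_add]
  · refine Eq.trans ?_ ((add_left_mono (a := v.2)).map_finset_min' (hA.image Prod.snd)).symm
    simp only [image_image, Function.comp_def, Prod.snd_add]

theorem cornerForm_image_add (A : Finset (ℤ × ℤ)) (v : ℤ × ℤ) :
    cornerForm (A.image (· + v)) = cornerForm A := by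
  rcases A.eq_empty_or_nonempty with rfl | hA
  · rfl
  simp only [cornerForm, lowerLeft_image_add hA, image_image, Function.comp_def,
    add_sub_add_right_eq_sub]

theorem image_add_lowerLeft_cornerForm (A : Finset (ℤ × ℤ)) :
    (cornerForm A).image (· + lowerLeft A) = A := by
  simp [cornerForm, image_image, Function.comp_def]

theorem rotTransEquiv_iff_exists_cornerForm_eq {S T : Finset (ℤ × ℤ)} :
    RotTransEquiv S T ↔ ∃ k ∈ range 4, cornerForm (S.image Rot90^[k]) = cornerForm T := by
  constructor
  · rintro ⟨k, v, rfl⟩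
    refine ⟨k % 4, mem_range.2 (k.mod_lt four_pos), ?_⟩
    rw [iterate_rot90_mod_four, ← cornerForm_image_add _ v, image_image]
    rfl
  · rintro ⟨k, -, h⟩
    have hT := image_add_lowerLeft_cornerForm T
    rw [← h, cornerForm, image_image, image_image] at hT
    refine ⟨k, lowerLeft T - lowerLeft (S.image Rot90^[k]), hT.symm.trans ?_⟩
    congr 1
    funext p
    simp only [Function.comp_apply]
    abel

instance : DecidableRel RotTransEquiv := fun _ _ =>
  decidable_of_iff' _ rotTransEquiv_iff_exists_cornerForm_eq

theorem rotTransEquiv_image_add_iff {S T : Finset (ℤ × ℤ)} (v : ℤ × ℤ) :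
    RotTransEquiv S (T.image (· + v)) ↔ RotTransEquiv S T := by
  simp only [rotTransEquiv_iff_exists_cornerForm_eq, cornerForm_image_add]

def forwardBall : Finset (ℤ × ℤ) :=
  {(0,1), (0,2), (0,3), (1,-2), (1,-1), (1,0), (1,1), (1,2), (2,-1), (2,0), (2,1), (3,0)}

theorem mem_forwardBall {p : ℤ × ℤ} (hlex : 0 < p.1 ∨ p.1 = 0 ∧ 0 < p.2)
    (hdist : |p.1| + |p.2| ≤ 3) : p ∈ forwardBall := by
  obtain ⟨x, y⟩ := p
  dsimp only at hlex hdist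
  obtain ⟨hx0, hx3⟩ : 0 ≤ x ∧ x ≤ 3 := by cases abs_cases x <;> cases abs_cases y <;> omega
  obtain ⟨hy0, hy3⟩ : -3 ≤ y ∧ y ≤ 3 := by cases abs_cases x <;> cases abs_cases y <;> omega
  interval_cases x <;> interval_cases y <;> simp_all [forwardBall]

/-- In the order I, O, T, S, Z, L, J. -/
def oneSidedTetrominoes : Finset (Finset (ℤ × ℤ)) :=
  { {(0,0),(1,0),(2,0),(3,0)},
    {(0,0),(1,0),(0,1),(1,1)},
    {(0,0),(1,0),(2,0),(1,1)},
    {(1,0),(2,0),(0,1),(1,1)},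
    {(0,0),(1,0),(1,1),(2,1)},
    {(0,0),(1,0),(2,0),(0,1)},
    {(0,0),(1,0),(2,0),(2,1)} }

theorem exists_image_add_eq_insert_zero {S : Finset (ℤ × ℤ)} (hcard : #S = 4)
    (hconn : ConnectedConfig S) :
    ∃ v : ℤ × ℤ, ∃ T ∈ forwardBall.powersetCard 3, S.image (· + v) = insert 0 T := by
  obtain ⟨a, ha, hmin⟩ := S.exists_min_image toLex (card_pos.1 (by omega))
  have hinj : Function.Injective (· + -a) := add_left_injective _
  have h0 : (0 : ℤ × ℤ) ∈ S.image (· + -a) := mem_image.2 ⟨a, ha, add_neg_cancel a⟩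
  refine ⟨-a, (S.image (· + -a)).erase 0, mem_powersetCard.2 ⟨?_, ?_⟩, (insert_erase h0).symm⟩
  · intro q hq
    obtain ⟨hq0, hq⟩ := mem_erase.1 hq
    obtain ⟨p, hp, rfl⟩ := mem_image.1 hq
    have hlex := Prod.Lex.le_iff.1 (hmin p hp)
    have hdist := hconn.abs_add_abs_lt_card ha hp
    have hne : p.1 ≠ a.1 ∨ p.2 ≠ a.2 := by
      by_contra! h
      exact hq0 (by rw [Prod.ext h.1 h.2, add_neg_cancel])
    simp only [ofLex_toLex] at hlex
    rw [hcard] at hdist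
    apply mem_forwardBall <;> simp only [← sub_eq_add_neg, Prod.fst_sub, Prod.snd_sub] <;> omega
  · rw [card_erase_of_mem h0, card_image_of_injective _ hinj, hcard]

theorem exists_rotTransEquiv_insert_zero :
    ∀ T ∈ forwardBall.powersetCard 3, ConnectedConfig (insert 0 T) →
      ∃ U ∈ oneSidedTetrominoes, RotTransEquiv U (insert 0 T) := by
  decide +kernel

/-- Up to translation and rotation (but not reflection), there are exactly 7 connected
configurations of 4 cells (the one-sided tetrominoes). -/
theorem four_cell_configs_up_to_rotation_translation :
    ∃ R : Finset (Finset (ℤ × ℤ)),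
      R.card = 7 ∧
      (∀ S ∈ R, S.card = 4 ∧ ConnectedConfig S) ∧
      (∀ S ∈ R, ∀ T ∈ R, S ≠ T → ¬ RotTransEquiv S T) ∧
      (∀ S : Finset (ℤ × ℤ), S.card = 4 → ConnectedConfig S →
        ∃ T ∈ R, RotTransEquiv T S) := by
  refine ⟨oneSidedTetrominoes, by decide +kernel, by decide +kernel, by decide +kernel, ?_⟩
  intro S hcard hconn
  obtain ⟨v, T, hT, hST⟩ := exists_image_add_eq_insert_zero hcard hconn
  have hconnT : ConnectedConfig (insert 0 T) :=
    hST ▸ hconn.image fun p q => (sideAdj_add_right v).2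
  obtain ⟨U, hU, hUT⟩ := exists_rotTransEquiv_insert_zero T hT hconnT
  exact ⟨U, hU, (rotTransEquiv_image_add_iff v).1 (hST ▸ hUT)⟩
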